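/- Integrating the linearized three-dimensional heat balance over the cross section A (zeroth moment) yields ρ c_ν I₁ θ¹_t + I₁ q¹_x = − Θ₀ I₁ [ s_t/2 + ε_t ]; equivalently, after dividing by I₁ > 0, ρ c_ν θ¹_t + q¹_x + Θ₀ [ ½(φ_x + ψ + ℓw)_t + (w_x − ℓφ)_t ] = 0. -/

import Mathlib

open MeasureTheory Filter

theorem heat_balance_zeroth_moment
    (A : Set (ℝ × ℝ)) (hA : MeasurableSet A) (hAfin : volume A < ⊤)
    (ρ cν Θ0 ℓ : ℝ)
    (hρ : 0 < ρ) (hcν : 0 < cν) (hΘ0 : 0 < Θ0) (hℓ : 0 < ℓ)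
    (θ1t θ2t θ3t q1x q2x q3x εt st κt : ℝ)
    (I1 I2 I3 : ℝ)
    (hI1 : I1 = ∫ p in A, (1 : ℝ)) (hI1pos : 0 < I1)
    (hI2 : I2 = ∫ p in A, p.1 ^ 2) (hI2pos : 0 < I2)
    (hI3 : I3 = ∫ p in A, p.2 ^ 2) (hI3pos : 0 < I3)
    (hsym2 : (∫ p in A, p.1) = 0)
    (hsym3 : (∫ p in A, p.2) = 0)
    (hsym23 : (∫ p in A, p.1 * p.2) = 0)
    (hbal : ∀ p ∈ A,
      ρ * cν * (θ1t + p.1 * θ2t + p.2 * θ3t)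
        = -(q1x + p.1 * q2x + p.2 * q3x)
          - Θ0 * ((1 + p.1 * ℓ) * εt + p.2 * κt + st / 2)) :
    ρ * cν * I1 * θ1t + I1 * q1x = -(Θ0 * I1 * (st / 2 + εt)) ∧
    ρ * cν * θ1t + q1x + Θ0 * (st / 2 + εt) = 0 := by

  -- abbreviations for the coefficients of the affine identity
  set a : ℝ := ρ * cν * θ1t + q1x + Θ0 * (εt + st / 2) with ha
  set b : ℝ := ρ * cν * θ2t + q2x + Θ0 * (ℓ * εt) with hb
  set c : ℝ := ρ * cν * θ3t + q3x + Θ0 * κt with hc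
  have hconst : IntegrableOn (fun _ : ℝ × ℝ => (1:ℝ)) A volume :=
    integrableOn_const hAfin.ne
  have h2sq : IntegrableOn (fun p : ℝ × ℝ => p.1 ^ 2) A volume := by
    by_contra h
    rw [integral_undef h] at hI2
    exact absurd hI2 hI2pos.ne'
  have h3sq : IntegrableOn (fun p : ℝ × ℝ => p.2 ^ 2) A volume := by
    by_contra h
    rw [integral_undef h] at hI3
    exact absurd hI3 hI3pos.ne'
  have hf1 : IntegrableOn (fun p : ℝ × ℝ => p.1) A volume := by
    refine Integrable.mono' (hconst.add h2sq) (measurable_fst.aestronglyMeasurable) ?_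
    filter_upwards with p
    simp only [Real.norm_eq_abs, Pi.add_apply]
    nlinarith [sq_nonneg (|p.1| - 1), sq_abs p.1]
  have hf2 : IntegrableOn (fun p : ℝ × ℝ => p.2) A volume := by
    refine Integrable.mono' (hconst.add h3sq) (measurable_snd.aestronglyMeasurable) ?_
    filter_upwards with p
    simp only [Real.norm_eq_abs, Pi.add_apply]
    nlinarith [sq_nonneg (|p.2| - 1), sq_abs p.2]
  have hzero : (∫ p in A, (a + b * p.1 + c * p.2)) = 0 := by
    rw [setIntegral_congr_fun hA (g := fun _ => (0:ℝ)) ?_]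
    · simp
    · intro p hp
      have := hbal p hp
      simp only [ha, hb, hc]
      ring_nf
      ring_nf at this
      linarith
  have hsum : (∫ p in A, (a + b * p.1 + c * p.2))
      = a * I1 + b * (∫ p in A, p.1) + c * (∫ p in A, p.2) := by
    have h1 : IntegrableOn (fun _ : ℝ × ℝ => a) A volume :=
      integrableOn_const hAfin.ne
    have hab : IntegrableOn (fun p : ℝ × ℝ => a + b * p.1) A volume :=
      h1.add (hf1.const_mul b)
    rw [integral_add hab (hf2.const_mul c), integral_add h1 (hf1.const_mul b),
        integral_const_mul, integral_const_mul, setIntegral_const]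
    have : I1 = (volume A).toReal := by
      rw [hI1]; simp; rfl
    rw [this, smul_eq_mul]; simp only [Measure.real]; ring
  have haz : a = 0 := by
    rw [hsum, hsym2, hsym3] at hzero
    have : a * I1 = 0 := by linarith
    rcases mul_eq_zero.mp this with h | h
    · exact h
    · exact absurd h hI1pos.ne'
  constructor
  · have : (ρ * cν * θ1t + q1x + Θ0 * (εt + st / 2)) = 0 := by rw [← ha]; exact haz
    nlinarith [this]
  · have : (ρ * cν * θ1t + q1x + Θ0 * (εt + st / 2)) = 0 := by rw [← ha]; exact haz
    linarith
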